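/- Let M be a compact metric space, let c₀, c₁ : [0,1] → M be continuous maps, and let w₀, w₁ : [0,1] → ℝ be continuous with w₀(t) > 0 and w₁(t) > 0 for all t. If ∫₀¹ f(c₀(t))·w₀(t) dt = ∫₀¹ f(c₁(t))·w₁(t) dt for every continuous function f : M → ℝ, then the images coincide: c₀([0,1]) = c₁([0,1]). -/
import Mathlib

open Filter Topology MeasureTheory Set

lemma unitInterval_open_pos {U : Set unitInterval} (hU : IsOpen U) {t₀ : unitInterval}
    (ht₀ : t₀ ∈ U) : 0 < volume U := by
  rw [pos_iff_ne_zero]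
  intro h0
  have hle := MeasureTheory.Measure.volume_subtype_coe_eq_zero_of_volume_eq_zero
    (measurableSet_Icc : MeasurableSet (Set.Icc (0:ℝ) 1)).nullMeasurableSet h0
  -- coe '' U has measure 0 in ℝ; but it contains an interval of positive measure
  obtain ⟨V, hVopen, hVU⟩ := isOpen_induced_iff.mp hU
  obtain ⟨ε, hε, hball⟩ := Metric.isOpen_iff.mp hVopen (t₀ : ℝ) (by rw [← hVU] at ht₀; exact ht₀)
  have hsub : Set.Ioo (max 0 ((t₀:ℝ) - ε)) (min 1 ((t₀:ℝ) + ε)) ⊆ (Subtype.val '' U) := by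
    intro x hx
    have hx01 : x ∈ Set.Icc (0:ℝ) 1 := ⟨le_of_lt (lt_of_le_of_lt (le_max_left _ _) hx.1),
      le_of_lt (lt_of_lt_of_le hx.2 (min_le_left _ _))⟩
    refine ⟨⟨x, hx01⟩, ?_, rfl⟩
    rw [← hVU]
    apply hball
    rw [Metric.mem_ball, Real.dist_eq, abs_lt]
    constructor
    · have := lt_of_le_of_lt (le_max_right 0 ((t₀:ℝ) - ε)) hx.1; linarith
    · have := lt_of_lt_of_le hx.2 (min_le_right 1 ((t₀:ℝ) + ε)); linarith
  have hpos : (0:ENNReal) < volume (Set.Ioo (max 0 ((t₀:ℝ) - ε)) (min 1 ((t₀:ℝ) + ε))) := by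
    rw [Real.volume_Ioo]
    have h1 : (t₀:ℝ) ∈ Set.Icc (0:ℝ) 1 := t₀.2
    have : max 0 ((t₀:ℝ) - ε) < min 1 ((t₀:ℝ) + ε) := by
      rcases h1 with ⟨h1a, h1b⟩
      rcases max_cases 0 ((t₀:ℝ) - ε) with ⟨he, _⟩ | ⟨he, _⟩ <;>
      rcases min_cases 1 ((t₀:ℝ) + ε) with ⟨hf, _⟩ | ⟨hf, _⟩ <;> rw [he, hf] <;> linarith
    simpa using this
  exact absurd (measure_mono_null hsub hle) hpos.ne'

lemma integral_pos_unitInterval {g : unitInterval → ℝ} (hg : Continuous g)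
    (hnn : ∀ t, 0 ≤ g t) {t₀ : unitInterval} (ht₀ : 0 < g t₀) :
    0 < ∫ t, g t := by
  have hint : Integrable g := hg.integrable_of_hasCompactSupport
    (HasCompactSupport.of_compactSpace g)
  rw [integral_pos_iff_support_of_nonneg hnn hint]
  exact unitInterval_open_pos hg.isOpen_support (t₀ := t₀) (by simp [Function.mem_support, ht₀.ne'])

lemma range_subset_aux {M : Type*} [MetricSpace M] [CompactSpace M]
    (c₀ c₁ : unitInterval → M) (hc₀ : Continuous c₀) (hc₁ : Continuous c₁)
    (w₀ w₁ : unitInterval → ℝ) (hw₀ : Continuous w₀)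
    (hw₀pos : ∀ t, 0 < w₀ t)
    (h : ∀ f : M → ℝ, Continuous f →
      ∫ t : unitInterval, f (c₀ t) * w₀ t = ∫ t : unitInterval, f (c₁ t) * w₁ t) :
    Set.range c₀ ⊆ Set.range c₁ := by
  intro x hx
  by_contra hxn
  obtain ⟨t₀, rfl⟩ := hx
  set K := Set.range c₁ with hK
  have hKc : IsClosed K := (isCompact_range hc₁).isClosed
  have hKne : K.Nonempty := ⟨c₁ 0, Set.mem_range_self 0⟩
  set f : M → ℝ := fun y => Metric.infDist y K with hf
  have hfc : Continuous f := Metric.continuous_infDist_pt K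
  have heq := h f hfc
  have hzero : ∀ t, f (c₁ t) = 0 := fun t =>
    Metric.infDist_zero_of_mem (Set.mem_range_self t)
  have hrhs : ∫ t : unitInterval, f (c₁ t) * w₁ t = 0 := by
    simp [hzero]
  have hlhs : 0 < ∫ t : unitInterval, f (c₀ t) * w₀ t := by
    apply integral_pos_unitInterval
    · exact (hfc.comp hc₀).mul hw₀
    · exact fun t => mul_nonneg (Metric.infDist_nonneg) (hw₀pos t).le
    · exact mul_pos ((hKc.notMem_iff_infDist_pos hKne).1 hxn) (hw₀pos t₀)
  rw [heq, hrhs] at hlhs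
  exact lt_irrefl 0 hlhs

/-- Let `M` be a compact metric space, `c₀, c₁ : [0,1] → M` continuous and
`w₀, w₁ : [0,1] → ℝ` continuous and strictly positive. If
`∫₀¹ f(c₀(t))·w₀(t) dt = ∫₀¹ f(c₁(t))·w₁(t) dt` for every continuous
`f : M → ℝ`, then `c₀([0,1]) = c₁([0,1])`. -/
theorem image_eq_of_integrals_eq {M : Type*} [MetricSpace M] [CompactSpace M]
    (c₀ c₁ : unitInterval → M) (hc₀ : Continuous c₀) (hc₁ : Continuous c₁)
    (w₀ w₁ : unitInterval → ℝ) (hw₀ : Continuous w₀) (hw₁ : Continuous w₁)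
    (hw₀pos : ∀ t, 0 < w₀ t) (hw₁pos : ∀ t, 0 < w₁ t)
    (h : ∀ f : M → ℝ, Continuous f →
      ∫ t : unitInterval, f (c₀ t) * w₀ t = ∫ t : unitInterval, f (c₁ t) * w₁ t) :
    Set.range c₀ = Set.range c₁ := by
  apply Set.Subset.antisymm
  · exact range_subset_aux c₀ c₁ hc₀ hc₁ w₀ w₁ hw₀ hw₀pos h
  · exact range_subset_aux c₁ c₀ hc₁ hc₀ w₁ w₀ hw₁ hw₁pos (fun f hf => (h f hf).symm)
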